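/- Let m > 0, s > 0, Λ > 0 and κ ∈ ℝ. Let g : ℝ → ℝ be continuously differentiable with g(y) ≤ 0 for all y, with |g′(y)| ≤ C₀(1 + |y|) for some constant C₀, and with g′(y) ≥ (κ − y)/Λ for all y ∈ ℝ. Define F(x) = (1/m)·log E[exp(m·g(x + √s·Z))], where Z is standard Gaussian. Then F is differentiable on ℝ and F′(x) ≥ (κ − x)/(Λ + m s) for all x ∈ ℝ. (Inductive step, via Gaussian integration by parts, of the lower bound ∂ₓΦ_γ(t,x) ≥ (κ−x)/λ(t) in Proposition 4.1.) -/

import Mathlib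

/-!
Write `w = exp (m g (x + √s Z))`. Differentiating under the integral gives
`F'(x) = E[g'(x + √s Z) w] / E[w]`, a `w`-weighted mean of `g'`. Inserting the lower bound
`g'(y) ≥ (κ - y) / Λ` leaves the weighted mean of `√s Z`, and Gaussian integration by parts
`E[Z f(Z)] = E[f'(Z)]` with `f = w` turns `E[Z w]` into `m √s E[g'(x + √s Z) w]`.
Hence `Λ F'(x) ≥ κ - x - m s F'(x)`.
-/

open MeasureTheory ProbabilityTheory

/-- The standard Gaussian measure on `ℝ`. -/
noncomputable def stdGauss : Measure ℝ := gaussianReal 0 1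

open Real

instance isProbabilityMeasure_stdGauss : IsProbabilityMeasure stdGauss :=
  inferInstanceAs (IsProbabilityMeasure (gaussianReal 0 1))

lemma integrable_abs_stdGauss : Integrable (fun z : ℝ => |z|) stdGauss :=
  ((memLp_id_gaussianReal 1).integrable le_rfl).abs

lemma gaussianPDFReal_zero_one :
    gaussianPDFReal 0 1 = fun z => (√(2 * π))⁻¹ * exp (-z ^ 2 / 2) := by
  simp [gaussianPDFReal_def]

lemma hasDerivAt_gaussianPDFReal_zero_one (z : ℝ) :
    HasDerivAt (gaussianPDFReal 0 1) (-z * gaussianPDFReal 0 1 z) z := by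
  have hq : HasDerivAt (fun y : ℝ => -y ^ 2 / 2) (-z) z :=
    ((hasDerivAt_pow 2 z).fun_neg.div_const 2).congr_deriv (by ring)
  rw [gaussianPDFReal_zero_one]
  exact (hq.exp.const_mul (√(2 * π))⁻¹).congr_deriv (by ring)

lemma integral_stdGauss_eq_integral_gaussianPDFReal_mul (f : ℝ → ℝ) :
    ∫ z, f z ∂stdGauss = ∫ z, gaussianPDFReal 0 1 z * f z :=
  integral_gaussianReal_eq_integral_smul one_ne_zero

lemma integrable_stdGauss_iff {f : ℝ → ℝ} :
    Integrable f stdGauss ↔ Integrable (fun z => gaussianPDFReal 0 1 z * f z) := by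
  rw [stdGauss, gaussianReal_of_var_ne_zero 0 one_ne_zero,
    integrable_withDensity_iff_integrable_smul' (measurable_gaussianPDF 0 1)
      (ae_of_all _ fun _ => gaussianPDF_lt_top)]
  simp [toReal_gaussianPDF]

theorem integral_id_mul_stdGauss_eq_integral_deriv {f f' : ℝ → ℝ}
    (hf : ∀ z, HasDerivAt f (f' z) z) (hfi : Integrable f stdGauss)
    (hf'i : Integrable f' stdGauss) (hzf : Integrable (fun z => z * f z) stdGauss) :
    ∫ z, z * f z ∂stdGauss = ∫ z, f' z ∂stdGauss := by
  rw [integrable_stdGauss_iff] at hfi hf'i hzf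
  have ibp := integral_mul_deriv_eq_deriv_mul_of_integrable (u := f) (u' := f')
    (v' := fun z => -z * gaussianPDFReal 0 1 z) (fun z _ => hf z)
    (fun z _ => hasDerivAt_gaussianPDFReal_zero_one z)
    (hzf.neg.congr (ae_of_all _ fun z => by simp only [Pi.neg_apply, Pi.mul_apply]; ring))
    (hf'i.congr (ae_of_all _ fun z => by simp only [Pi.mul_apply]; ring))
    (hfi.congr (ae_of_all _ fun z => by simp only [Pi.mul_apply]; ring))
  rw [integral_stdGauss_eq_integral_gaussianPDFReal_mul,
    integral_stdGauss_eq_integral_gaussianPDFReal_mul]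
  calc ∫ z, gaussianPDFReal 0 1 z * (z * f z) = -∫ z, f z * (-z * gaussianPDFReal 0 1 z) := by
        rw [← integral_neg]; congr 1; ext z; ring
    _ = ∫ z, gaussianPDFReal 0 1 z * f' z := by
        rw [ibp, neg_neg]; congr 1; ext z; ring

section LinearGrowth

variable {μ : Measure ℝ}

lemma abs_comp_add_mul_le {f : ℝ → ℝ} {C : ℝ} (hf : ∀ y, |f y| ≤ C * (1 + |y|)) (x c z : ℝ) :
    |f (x + c * z)| ≤ C * (1 + |x|) + C * |c| * |z| := by
  have hC : 0 ≤ C := by simpa using (abs_nonneg (f 0)).trans (hf 0)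
  calc |f (x + c * z)| ≤ C * (1 + |x + c * z|) := hf _
    _ ≤ C * (1 + (|x| + |c| * |z|)) := by
        gcongr; exact (abs_add_le _ _).trans_eq (by rw [abs_mul])
    _ = _ := by ring

lemma integrable_of_abs_le_linear [IsFiniteMeasure μ] (hμ : Integrable (fun z => |z|) μ)
    {f : ℝ → ℝ} (hf : AEStronglyMeasurable f μ) {a b : ℝ} (hfb : ∀ z, |f z| ≤ a + b * |z|) :
    Integrable f μ :=
  ((integrable_const a).add (hμ.const_mul b)).mono' hf (ae_of_all _ fun z => by simpa using hfb z)

theorem hasDerivAt_integral_comp_add_mul [IsFiniteMeasure μ] (hμ : Integrable (fun z => |z|) μ)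
    {h h' : ℝ → ℝ} {C : ℝ} (hd : ∀ y, HasDerivAt h (h' y) y) (hh' : Continuous h')
    (hb : ∀ y, |h' y| ≤ C * (1 + |y|)) {c x₀ : ℝ}
    (hi : Integrable (fun z => h (x₀ + c * z)) μ) :
    HasDerivAt (fun x => ∫ z, h (x + c * z) ∂μ) (∫ z, h' (x₀ + c * z) ∂μ) x₀ := by
  have hh : Continuous h := continuous_iff_continuousAt.2 fun y => (hd y).continuousAt
  refine (hasDerivAt_integral_of_dominated_loc_of_deriv_le (Metric.ball_mem_nhds x₀ one_pos)
    (F := fun x z => h (x + c * z)) (F' := fun x z => h' (x + c * z))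
    (bound := fun z => C * (2 + |x₀|) + C * |c| * |z|)
    (Filter.Eventually.of_forall fun x => (by fun_prop : Continuous _).aestronglyMeasurable) hi
    (by fun_prop : Continuous _).aestronglyMeasurable
    (ae_of_all _ fun z x hx => ?_) ((integrable_const _).add (hμ.const_mul _))
    (ae_of_all _ fun z x _ => ?_)).2
  · have hC : 0 ≤ C := by simpa using (abs_nonneg (h' 0)).trans (hb 0)
    have hx' : |x| ≤ |x₀| + 1 := by
      have := abs_sub_abs_le_abs_sub x x₀
      rw [Metric.mem_ball, Real.dist_eq] at hx
      linarith
    calc ‖h' (x + c * z)‖ ≤ C * (1 + |x|) + C * |c| * |z| := abs_comp_add_mul_le hb x c z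
      _ ≤ _ := by
          have := mul_le_mul_of_nonneg_left (show 1 + |x| ≤ 2 + |x₀| by linarith) hC
          linarith
  · exact ((hd (x + c * z)).comp x ((hasDerivAt_id' x).add_const (c * z))).congr_deriv (mul_one _)

end LinearGrowth

section GibbsWeight

variable {m C₀ : ℝ} {g : ℝ → ℝ}

lemma hasDerivAt_exp_mul_comp (hg : Differentiable ℝ g) (y : ℝ) :
    HasDerivAt (fun y => exp (m * g y)) (m * (deriv g y * exp (m * g y))) y :=
  ((hg y).hasDerivAt.const_mul m).exp.congr_deriv (by ring)

lemma integrable_mul_exp_comp_stdGauss (hm : 0 ≤ m) (hg : Continuous g) (hg0 : ∀ y, g y ≤ 0)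
    {f : ℝ → ℝ} (hf : Continuous f) {a b : ℝ} (hfb : ∀ z, |f z| ≤ a + b * |z|) (x c : ℝ) :
    Integrable (fun z => f z * exp (m * g (x + c * z))) stdGauss := by
  refine integrable_of_abs_le_linear integrable_abs_stdGauss (a := a) (b := b)
    (by fun_prop : Continuous _).aestronglyMeasurable fun z => ?_
  have hw : exp (m * g (x + c * z)) ≤ 1 :=
    exp_le_one_iff.2 (mul_nonpos_of_nonneg_of_nonpos hm (hg0 _))
  rw [abs_mul, abs_of_pos (exp_pos _)]
  exact (mul_le_of_le_one_right (abs_nonneg _) hw).trans (hfb z)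

lemma integrable_exp_comp_stdGauss (hm : 0 ≤ m) (hg : Continuous g) (hg0 : ∀ y, g y ≤ 0)
    (x c : ℝ) : Integrable (fun z => exp (m * g (x + c * z))) stdGauss := by
  simpa using integrable_mul_exp_comp_stdGauss hm hg hg0 continuous_const
    (f := fun _ => 1) (a := 1) (b := 0) (by simp) x c

lemma integrable_id_mul_exp_comp_stdGauss (hm : 0 ≤ m) (hg : Continuous g)
    (hg0 : ∀ y, g y ≤ 0) (x c : ℝ) :
    Integrable (fun z => z * exp (m * g (x + c * z))) stdGauss :=
  integrable_mul_exp_comp_stdGauss hm hg hg0 continuous_id (a := 0) (b := 1) (by simp) x c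

lemma integrable_deriv_mul_exp_comp_stdGauss (hm : 0 ≤ m) (hg : ContDiff ℝ 1 g)
    (hg0 : ∀ y, g y ≤ 0) (hg' : ∀ y, |deriv g y| ≤ C₀ * (1 + |y|)) (x c : ℝ) :
    Integrable (fun z => deriv g (x + c * z) * exp (m * g (x + c * z))) stdGauss :=
  integrable_mul_exp_comp_stdGauss hm hg.continuous hg0
    ((hg.continuous_deriv le_rfl).comp (by fun_prop)) (abs_comp_add_mul_le hg' x c) x c

lemma integral_id_mul_exp_comp_stdGauss (hm : 0 ≤ m) (hg : ContDiff ℝ 1 g)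
    (hg0 : ∀ y, g y ≤ 0) (hg' : ∀ y, |deriv g y| ≤ C₀ * (1 + |y|)) (x c : ℝ) :
    ∫ z, z * exp (m * g (x + c * z)) ∂stdGauss =
      m * c * ∫ z, deriv g (x + c * z) * exp (m * g (x + c * z)) ∂stdGauss := by
  have hw : ∀ z, HasDerivAt (fun z => exp (m * g (x + c * z)))
      (m * c * (deriv g (x + c * z) * exp (m * g (x + c * z)))) z := fun z => by
    have := (hasDerivAt_exp_mul_comp (m := m) (hg.differentiable one_ne_zero) (x + c * z)).comp z
      (((hasDerivAt_id' z).const_mul c).const_add x)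
    exact this.congr_deriv (by ring)
  rw [← integral_const_mul]
  refine integral_id_mul_stdGauss_eq_integral_deriv hw
    (integrable_exp_comp_stdGauss hm hg.continuous hg0 x c)
    ((integrable_deriv_mul_exp_comp_stdGauss hm hg hg0 hg' x c).const_mul _)
    (integrable_id_mul_exp_comp_stdGauss hm hg.continuous hg0 x c)

lemma hasDerivAt_integral_exp_comp_stdGauss (hm : 0 ≤ m) (hg : ContDiff ℝ 1 g)
    (hg0 : ∀ y, g y ≤ 0) (hg' : ∀ y, |deriv g y| ≤ C₀ * (1 + |y|)) (c x : ℝ) :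
    HasDerivAt (fun x => ∫ z, exp (m * g (x + c * z)) ∂stdGauss)
      (m * ∫ z, deriv g (x + c * z) * exp (m * g (x + c * z)) ∂stdGauss) x := by
  rw [← integral_const_mul]
  refine hasDerivAt_integral_comp_add_mul integrable_abs_stdGauss
    (hasDerivAt_exp_mul_comp (hg.differentiable one_ne_zero))
    (by have := hg.continuous_deriv le_rfl; have := hg.continuous; fun_prop)
    (C := m * C₀) (fun y => ?_) (integrable_exp_comp_stdGauss hm hg.continuous hg0 x c)
  have hw : exp (m * g y) ≤ 1 := exp_le_one_iff.2 (mul_nonpos_of_nonneg_of_nonpos hm (hg0 _))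
  rw [abs_mul, abs_mul, abs_of_nonneg hm, abs_of_pos (exp_pos _), mul_assoc]
  exact mul_le_mul_of_nonneg_left ((mul_le_of_le_one_right (abs_nonneg _) hw).trans (hg' y)) hm

end GibbsWeight

lemma sub_mul_integral_exp_comp_le {m C₀ Λ κ : ℝ} {g : ℝ → ℝ} (hm : 0 ≤ m) (hΛ : 0 < Λ)
    (hg : ContDiff ℝ 1 g) (hg0 : ∀ y, g y ≤ 0) (hg' : ∀ y, |deriv g y| ≤ C₀ * (1 + |y|))
    (hglb : ∀ y, (κ - y) / Λ ≤ deriv g y) (x c : ℝ) :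
    (κ - x) * ∫ z, exp (m * g (x + c * z)) ∂stdGauss ≤
      (Λ + m * c ^ 2) * ∫ z, deriv g (x + c * z) * exp (m * g (x + c * z)) ∂stdGauss := by
  set E := ∫ z, exp (m * g (x + c * z)) ∂stdGauss
  set A := ∫ z, deriv g (x + c * z) * exp (m * g (x + c * z)) ∂stdGauss
  have hE := integrable_exp_comp_stdGauss hm hg.continuous hg0 x c
  have hZ := integrable_id_mul_exp_comp_stdGauss hm hg.continuous hg0 x c
  have hlin : ∫ z, (κ - (x + c * z)) / Λ * exp (m * g (x + c * z)) ∂stdGauss =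
      ((κ - x) * E - m * c ^ 2 * A) / Λ := by
    calc _ = ∫ z, ((κ - x) / Λ * exp (m * g (x + c * z)) -
            c / Λ * (z * exp (m * g (x + c * z)))) ∂stdGauss := by
          congr 1; ext z; ring
      _ = (κ - x) / Λ * E - c / Λ * (m * c * A) := by
          rw [integral_sub (hE.const_mul _) (hZ.const_mul _), integral_const_mul,
            integral_const_mul, integral_id_mul_exp_comp_stdGauss hm hg hg0 hg']
      _ = _ := by ring
  have hmono : ((κ - x) * E - m * c ^ 2 * A) / Λ ≤ A := by
    rw [← hlin]
    refine integral_mono ?_ (integrable_deriv_mul_exp_comp_stdGauss hm hg hg0 hg' x c)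
      fun z => mul_le_mul_of_nonneg_right (hglb _) (exp_pos _).le
    refine (hE.const_mul (κ - x) |>.sub (hZ.const_mul c)).div_const Λ |>.congr ?_
    exact ae_of_all _ fun z => by simp only [Pi.sub_apply]; ring
  rw [div_le_iff₀ hΛ] at hmono
  linarith

/-- inductive step of the lower bound `∂ₓΦ_γ(t,x) ≥ (κ−x)/λ(t)` in
Proposition 4.1: if `g ∈ C¹` satisfies `g ≤ 0`, `|g′(y)| ≤ C₀(1+|y|)` and
`g′(y) ≥ (κ−y)/Λ`, then `F(x) = (1/m)·log E[exp(m·g(x+√s·Z))]` is differentiable with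
`F′(x) ≥ (κ−x)/(Λ + m s)`. -/
theorem statement_17 (m s Λ κ C₀ : ℝ) (hm : 0 < m) (hs : 0 < s) (hΛ : 0 < Λ)
    (g : ℝ → ℝ) (hg : ContDiff ℝ 1 g) (hg0 : ∀ y, g y ≤ 0)
    (hg' : ∀ y, |deriv g y| ≤ C₀ * (1 + |y|))
    (hglb : ∀ y, (κ - y) / Λ ≤ deriv g y) :
    Differentiable ℝ
        (fun x => (1 / m) *
          Real.log (∫ z, Real.exp (m * g (x + Real.sqrt s * z)) ∂stdGauss)) ∧
      ∀ x : ℝ, (κ - x) / (Λ + m * s) ≤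
        deriv (fun x => (1 / m) *
          Real.log (∫ z, Real.exp (m * g (x + Real.sqrt s * z)) ∂stdGauss)) x := by
  set E := fun x => ∫ z, exp (m * g (x + √s * z)) ∂stdGauss
  set A := fun x => ∫ z, deriv g (x + √s * z) * exp (m * g (x + √s * z)) ∂stdGauss
  have hEpos : ∀ x, 0 < E x := fun x =>
    integral_exp_pos (integrable_exp_comp_stdGauss hm.le hg.continuous hg0 x _)
  have hF : ∀ x, HasDerivAt (fun x => 1 / m * log (E x)) (A x / E x) x := fun x =>
    (((hasDerivAt_integral_exp_comp_stdGauss hm.le hg hg0 hg' _ x).log (hEpos x).ne').const_mul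
      (1 / m)).congr_deriv (by field_simp; rfl)
  refine ⟨fun x => (hF x).differentiableAt, fun x => ?_⟩
  rw [(hF x).deriv, div_le_div_iff₀ (by positivity) (hEpos x)]
  have := sub_mul_integral_exp_comp_le hm.le hΛ hg hg0 hg' hglb x (√s)
  rwa [sq_sqrt hs.le, mul_comm _ (A x)] at this
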